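/- Let v₀ ∈ [5.1, 7.5] and set t₁ = (10v₀ − 25)/13, t₂ = (10v₀ + 1)/13, t₃ = (10v₀ + 153)/22, t₄ = 157/11. Then: (i) t₁ ≥ 2, t₂ − t₁ ≥ 2, t₃ − t₂ ≥ 2, t₄ − t₃ ≥ 2 and t₄ ≤ 20; (ii) for every t ∈ [0,20] and every real w lying in the consumption band C₁ at time t, 5.1 ≤ v₀ + V_in(t; t₁,t₂,t₃,t₄) − w ≤ 24.9; and (iii) for t = 20 and every w ∈ [13.2, 15.2], 5.3 ≤ v₀ + V_in(20; t₁,t₂,t₃,t₄) − w ≤ 7.3. -/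

import Mathlib

/-!
The switching times are read off from tight constraints: `t₁` is the moment at which the level
would reach `5.1` under the maximal consumption `1.3 (t - 2)`, the first activation lasts the
minimal `2` s, and `t₃` is placed so that `v₀` plus the whole pumped-in volume is `20.5` for every
`v₀`. The final level is then `20.5 - w ∈ [5.3, 7.3]`, and the level never exceeds
`20.5 < 24.9` because consumption is nonnegative. For the lower bound `5.1`, the pumped-in volume
has a closed affine form on each of the five phases of the pump, and on each segment of the
consumption band the level minus the maximal consumption is affine in `t`, so it suffices that it
is at least `5.1` at the segment's ends.
-/

/-- Volume of oil pumped in by time `t` with two activations during `[t₁,t₂] ∪ [t₃,t₄]`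
at rate 2.2 l/s. -/
noncomputable def Vin (t t₁ t₂ t₃ t₄ : ℝ) : ℝ :=
  2.2 * ((min t t₂ - min t t₁) + (min t t₄ - min t t₃))

/-- `w` lies in the consumption band `C₁` at time `t`. -/
def Cband (t w : ℝ) : Prop :=
  (0 ≤ t → t ≤ 2 → w = 0) ∧
  (2 ≤ t → t ≤ 4 → 1.1 * (t - 2) ≤ w ∧ w ≤ 1.3 * (t - 2)) ∧
  (4 ≤ t → t ≤ 8 → 2.2 ≤ w ∧ w ≤ 2.6) ∧
  (8 ≤ t → t ≤ 10 → 2.2 + 1.1 * (t - 8) ≤ w ∧ w ≤ 2.6 + 1.3 * (t - 8)) ∧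
  (10 ≤ t → t ≤ 12 → 4.4 + 2.4 * (t - 10) ≤ w ∧ w ≤ 5.2 + 2.6 * (t - 10)) ∧
  (12 ≤ t → t ≤ 14 → 9.2 ≤ w ∧ w ≤ 10.4) ∧
  (14 ≤ t → t ≤ 16 → 9.2 + 1.6 * (t - 14) ≤ w ∧ w ≤ 10.4 + 1.8 * (t - 14)) ∧
  (16 ≤ t → t ≤ 18 → 12.4 + 0.4 * (t - 16) ≤ w ∧ w ≤ 14 + 0.6 * (t - 16)) ∧
  (18 ≤ t → t ≤ 20 → 13.2 ≤ w ∧ w ≤ 15.2)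

section Vin

variable {t t₁ t₂ t₃ t₄ : ℝ}

theorem min_sub_min_le_sub {α : Type*} [AddCommGroup α] [LinearOrder α] [IsOrderedAddMonoid α]
    (c : α) {a b : α} (hab : a ≤ b) : min c b - min c a ≤ b - a := by
  rw [sub_le_iff_le_add, ← min_add_add_left]
  exact min_le_min (le_add_of_nonneg_left (sub_nonneg.2 hab)) (sub_add_cancel b a).ge

theorem Vin_le (h₁₂ : t₁ ≤ t₂) (h₃₄ : t₃ ≤ t₄) :
    Vin t t₁ t₂ t₃ t₄ ≤ 2.2 * (t₂ - t₁ + (t₄ - t₃)) := by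
  have := min_sub_min_le_sub t h₁₂
  have := min_sub_min_le_sub t h₃₄
  rw [Vin]
  linarith

theorem Vin_eq_zero (h : t ≤ t₁) (h₁₂ : t₁ ≤ t₂) (h₂₃ : t₂ ≤ t₃) (h₃₄ : t₃ ≤ t₄) :
    Vin t t₁ t₂ t₃ t₄ = 0 := by
  rw [Vin, min_eq_left h, min_eq_left (h.trans h₁₂), min_eq_left (by linarith : t ≤ t₃),
    min_eq_left (by linarith : t ≤ t₄)]
  ring

theorem Vin_eq_of_first_pumping (h₁ : t₁ ≤ t) (h₂ : t ≤ t₂) (h₂₃ : t₂ ≤ t₃) (h₃₄ : t₃ ≤ t₄) :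
    Vin t t₁ t₂ t₃ t₄ = 2.2 * (t - t₁) := by
  rw [Vin, min_eq_right h₁, min_eq_left h₂, min_eq_left (h₂.trans h₂₃),
    min_eq_left (by linarith : t ≤ t₄)]
  ring

theorem Vin_eq_of_idle (h₁₂ : t₁ ≤ t₂) (h₂ : t₂ ≤ t) (h₃ : t ≤ t₃) (h₃₄ : t₃ ≤ t₄) :
    Vin t t₁ t₂ t₃ t₄ = 2.2 * (t₂ - t₁) := by
  rw [Vin, min_eq_right (h₁₂.trans h₂), min_eq_right h₂, min_eq_left h₃, min_eq_left (h₃.trans h₃₄)]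
  ring

theorem Vin_eq_of_second_pumping (h₁₂ : t₁ ≤ t₂) (h₂₃ : t₂ ≤ t₃) (h₃ : t₃ ≤ t) (h₄ : t ≤ t₄) :
    Vin t t₁ t₂ t₃ t₄ = 2.2 * (t₂ - t₁ + (t - t₃)) := by
  rw [Vin, min_eq_right (by linarith : t₁ ≤ t), min_eq_right (h₂₃.trans h₃), min_eq_right h₃,
    min_eq_left h₄]

theorem Vin_eq_of_done (h₁₂ : t₁ ≤ t₂) (h₂₃ : t₂ ≤ t₃) (h₃₄ : t₃ ≤ t₄) (h₄ : t₄ ≤ t) :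
    Vin t t₁ t₂ t₃ t₄ = 2.2 * (t₂ - t₁ + (t₄ - t₃)) := by
  rw [Vin, min_eq_right (by linarith : t₁ ≤ t), min_eq_right (by linarith : t₂ ≤ t),
    min_eq_right (h₃₄.trans h₄), min_eq_right h₄]

end Vin

theorem Cband.nonneg {t w : ℝ} (hw : Cband t w) (h₀ : 0 ≤ t) (h₂₀ : t ≤ 20) : 0 ≤ w := by
  obtain ⟨c₀, c₂, c₄, c₈, c₁₀, c₁₂, c₁₄, c₁₆, c₁₈⟩ := hw
  rcases le_total t 2 with h₂ | h₂; · exact (c₀ h₀ h₂).ge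
  rcases le_total t 4 with h₄ | h₄; · linarith [(c₂ h₂ h₄).1]
  rcases le_total t 8 with h₈ | h₈; · linarith [(c₄ h₄ h₈).1]
  rcases le_total t 10 with h₁₀ | h₁₀; · linarith [(c₈ h₈ h₁₀).1]
  rcases le_total t 12 with h₁₂ | h₁₂; · linarith [(c₁₀ h₁₀ h₁₂).1]
  rcases le_total t 14 with h₁₄ | h₁₄; · linarith [(c₁₂ h₁₂ h₁₄).1]
  rcases le_total t 16 with h₁₆ | h₁₆; · linarith [(c₁₄ h₁₄ h₁₆).1]
  rcases le_total t 18 with h₁₈ | h₁₈; · linarith [(c₁₆ h₁₆ h₁₈).1]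
  linarith [(c₁₈ h₁₈ h₂₀).1]

noncomputable section Controller

def pumpOn₁ (v₀ : ℝ) : ℝ := (10 * v₀ - 25) / 13

def pumpOff₁ (v₀ : ℝ) : ℝ := (10 * v₀ + 1) / 13

def pumpOn₂ (v₀ : ℝ) : ℝ := (10 * v₀ + 153) / 22

def pumpOff₂ : ℝ := 157 / 11

def supply (v₀ t : ℝ) : ℝ := v₀ + Vin t (pumpOn₁ v₀) (pumpOff₁ v₀) (pumpOn₂ v₀) pumpOff₂

variable {v₀ t w : ℝ}

theorem pump_latency (hv : 5.1 ≤ v₀) (hv' : v₀ ≤ 7.5) :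
    2 ≤ pumpOn₁ v₀ ∧ 2 ≤ pumpOff₁ v₀ - pumpOn₁ v₀ ∧ 2 ≤ pumpOn₂ v₀ - pumpOff₁ v₀ ∧
      2 ≤ pumpOff₂ - pumpOn₂ v₀ ∧ pumpOff₂ ≤ 20 := by
  unfold pumpOn₁ pumpOff₁ pumpOn₂ pumpOff₂
  refine ⟨?_, ?_, ?_, ?_, ?_⟩ <;> linarith

theorem supply_eq_of_pumpOff₂_le (hv : 5.1 ≤ v₀) (hv' : v₀ ≤ 7.5) (h : pumpOff₂ ≤ t) :
    supply v₀ t = 20.5 := by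
  obtain ⟨-, h₁₂, h₂₃, h₃₄, -⟩ := pump_latency hv hv'
  rw [supply, Vin_eq_of_done (by linarith) (by linarith) (by linarith) h]
  unfold pumpOn₁ pumpOff₁ pumpOn₂ pumpOff₂
  ring

theorem supply_le (hv : 5.1 ≤ v₀) (hv' : v₀ ≤ 7.5) : supply v₀ t ≤ 20.5 := by
  obtain ⟨-, h₁₂, -, h₃₄, -⟩ := pump_latency hv hv'
  have := Vin_le (t := t) (by linarith : pumpOn₁ v₀ ≤ pumpOff₁ v₀)
    (by linarith : pumpOn₂ v₀ ≤ pumpOff₂)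
  unfold supply
  unfold pumpOn₁ pumpOff₁ pumpOn₂ pumpOff₂ at *
  linarith

theorem supply_sub_le (hv : 5.1 ≤ v₀) (hv' : v₀ ≤ 7.5) (h₀ : 0 ≤ t) (h₂₀ : t ≤ 20)
    (hw : Cband t w) : supply v₀ t - w ≤ 20.5 := by
  linarith [supply_le (t := t) hv hv', hw.nonneg h₀ h₂₀]

theorem le_supply_sub_of_le_pumpOn₁ (hv : 5.1 ≤ v₀) (hv' : v₀ ≤ 7.5) (h₀ : 0 ≤ t)
    (h : t ≤ pumpOn₁ v₀) (hw : Cband t w) : 5.1 ≤ supply v₀ t - w := by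
  obtain ⟨-, h₁₂, h₂₃, h₃₄, -⟩ := pump_latency hv hv'
  rw [supply, Vin_eq_zero h (by linarith) (by linarith) (by linarith)]
  obtain ⟨c₀, c₂, -⟩ := hw
  unfold pumpOn₁ at h
  rcases le_total t 2 with h₂ | h₂
  · linarith [c₀ h₀ h₂]
  · linarith [(c₂ h₂ (by linarith)).2]

theorem le_supply_sub_of_first_pumping (hv : 5.1 ≤ v₀) (hv' : v₀ ≤ 7.5) (h₁ : pumpOn₁ v₀ ≤ t)
    (h₂ : t ≤ pumpOff₁ v₀) (hw : Cband t w) : 5.1 ≤ supply v₀ t - w := by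
  obtain ⟨hon₁, -, h₂₃, h₃₄, -⟩ := pump_latency hv hv'
  rw [supply, Vin_eq_of_first_pumping h₁ h₂ (by linarith) (by linarith)]
  obtain ⟨-, c₂, c₄, -⟩ := hw
  unfold pumpOn₁ pumpOff₁ at *
  rcases le_total t 4 with h₄ | h₄
  · linarith [(c₂ (by linarith) h₄).2]
  · linarith [(c₄ h₄ (by linarith)).2]

theorem le_supply_sub_of_idle (hv : 5.1 ≤ v₀) (hv' : v₀ ≤ 7.5) (h₂ : pumpOff₁ v₀ ≤ t)
    (h₃ : t ≤ pumpOn₂ v₀) (hw : Cband t w) : 5.1 ≤ supply v₀ t - w := by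
  obtain ⟨h₁, h₁₂, -, h₃₄, -⟩ := pump_latency hv hv'
  rw [supply, Vin_eq_of_idle (by linarith) h₂ h₃ (by linarith)]
  obtain ⟨-, -, c₄, c₈, c₁₀, -⟩ := hw
  unfold pumpOn₁ pumpOff₁ pumpOn₂ at *
  rcases le_total t 8 with h₈ | h₈
  · linarith [(c₄ (by linarith) h₈).2]
  rcases le_total t 10 with h₁₀ | h₁₀
  · linarith [(c₈ h₈ h₁₀).2]
  · linarith [(c₁₀ h₁₀ (by linarith)).2]

theorem le_supply_sub_of_second_pumping (hv : 5.1 ≤ v₀) (hv' : v₀ ≤ 7.5) (h₃ : pumpOn₂ v₀ ≤ t)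
    (h₄ : t ≤ pumpOff₂) (hw : Cband t w) : 5.1 ≤ supply v₀ t - w := by
  obtain ⟨h₁, h₁₂, h₂₃, -, -⟩ := pump_latency hv hv'
  rw [supply, Vin_eq_of_second_pumping (by linarith) (by linarith) h₃ h₄]
  obtain ⟨-, -, -, c₈, c₁₀, c₁₂, c₁₄, -⟩ := hw
  unfold pumpOn₁ pumpOff₁ pumpOn₂ pumpOff₂ at *
  rcases le_total t 10 with h₁₀ | h₁₀
  · linarith [(c₈ (by linarith) h₁₀).2]
  rcases le_total t 12 with h₁₂ | h₁₂
  · linarith [(c₁₀ h₁₀ h₁₂).2]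
  rcases le_total t 14 with h₁₄ | h₁₄
  · linarith [(c₁₂ h₁₂ h₁₄).2]
  · linarith [(c₁₄ h₁₄ (by linarith)).2]

theorem le_supply_sub_of_pumpOff₂_le (hv : 5.1 ≤ v₀) (hv' : v₀ ≤ 7.5) (h₄ : pumpOff₂ ≤ t)
    (h₂₀ : t ≤ 20) (hw : Cband t w) : 5.1 ≤ supply v₀ t - w := by
  rw [supply_eq_of_pumpOff₂_le hv hv' h₄]
  obtain ⟨-, -, -, -, -, -, c₁₄, c₁₆, c₁₈⟩ := hw
  unfold pumpOff₂ at h₄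
  rcases le_total t 16 with h₁₆ | h₁₆
  · linarith [(c₁₄ (by linarith) h₁₆).2]
  rcases le_total t 18 with h₁₈ | h₁₈
  · linarith [(c₁₆ h₁₆ h₁₈).2]
  · linarith [(c₁₈ h₁₈ h₂₀).2]

theorem le_supply_sub (hv : 5.1 ≤ v₀) (hv' : v₀ ≤ 7.5) (h₀ : 0 ≤ t) (h₂₀ : t ≤ 20)
    (hw : Cband t w) : 5.1 ≤ supply v₀ t - w := by
  rcases le_total t (pumpOn₁ v₀) with h₁ | h₁
  · exact le_supply_sub_of_le_pumpOn₁ hv hv' h₀ h₁ hw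
  rcases le_total t (pumpOff₁ v₀) with h₂ | h₂
  · exact le_supply_sub_of_first_pumping hv hv' h₁ h₂ hw
  rcases le_total t (pumpOn₂ v₀) with h₃ | h₃
  · exact le_supply_sub_of_idle hv hv' h₂ h₃ hw
  rcases le_total t pumpOff₂ with h₄ | h₄
  · exact le_supply_sub_of_second_pumping hv hv' h₃ h₄ hw
  · exact le_supply_sub_of_pumpOff₂_le hv hv' h₄ h₂₀ hw

end Controller

theorem stmt_16 (v₀ : ℝ) (hv₀ : 5.1 ≤ v₀ ∧ v₀ ≤ 7.5)
    (t₁ t₂ t₃ t₄ : ℝ)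
    (ht₁ : t₁ = (10 * v₀ - 25) / 13) (ht₂ : t₂ = (10 * v₀ + 1) / 13)
    (ht₃ : t₃ = (10 * v₀ + 153) / 22) (ht₄ : t₄ = 157 / 11) :
    -- (i) pump latency
    (t₁ ≥ 2 ∧ t₂ - t₁ ≥ 2 ∧ t₃ - t₂ ≥ 2 ∧ t₄ - t₃ ≥ 2 ∧ t₄ ≤ 20) ∧
    -- (ii) local safety
    (∀ t : ℝ, 0 ≤ t → t ≤ 20 → ∀ w : ℝ, Cband t w →
      5.1 ≤ v₀ + Vin t t₁ t₂ t₃ t₄ - w ∧ v₀ + Vin t t₁ t₂ t₃ t₄ - w ≤ 24.9) ∧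
    -- (iii) inductiveness at t = 20
    (∀ w : ℝ, 13.2 ≤ w → w ≤ 15.2 →
      5.3 ≤ v₀ + Vin 20 t₁ t₂ t₃ t₄ - w ∧ v₀ + Vin 20 t₁ t₂ t₃ t₄ - w ≤ 7.3) := by
  obtain ⟨hv, hv'⟩ := hv₀
  subst ht₁ ht₂ ht₃ ht₄
  have h_final : supply v₀ 20 = 20.5 :=
    supply_eq_of_pumpOff₂_le hv hv' (pump_latency hv hv').2.2.2.2
  refine ⟨pump_latency hv hv', fun t h₀ h₂₀ w hw => ⟨le_supply_sub hv hv' h₀ h₂₀ hw, ?_⟩,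
    fun w hw hw' => ?_⟩
  · exact (supply_sub_le hv hv' h₀ h₂₀ hw).trans (by norm_num)
  · change 5.3 ≤ supply v₀ 20 - w ∧ supply v₀ 20 - w ≤ 7.3
    rw [h_final]
    constructor <;> linarith
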